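/- arXiv:1912.02709 — 4 statements merged into one kernel-verified Lean document; each statement's English description precedes it below -/
import Mathlib

section
/- A countably infinite graph having property U is isomorphic to the Rado graph. Equivalently: any two countably infinite graphs each satisfying property U are isomorphic. -/
/-- Property U: for any disjoint finite sets A, B of vertices there is a vertex
outside A ∪ B adjacent to every vertex of A and to no vertex of B. -/
def PropertyU {V : Type*} (G : SimpleGraph V) : Prop :=
  ∀ A B : Finset V, Disjoint A B →
    ∃ v, v ∉ A ∧ v ∉ B ∧ (∀ a ∈ A, G.Adj v a) ∧ (∀ b ∈ B, ¬ G.Adj v b)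

open FirstOrder Language

instance : IsEmpty (Language.graph.Relations 0) := ⟨fun r => nomatch r⟩

lemma graph_isExtensionPair {V W : Type*} (G : SimpleGraph V) (H : SimpleGraph W)
    (hH : PropertyU H) :
    @Language.IsExtensionPair Language.graph V W G.structure H.structure := by
  classical
  letI := G.structure
  letI := H.structure
  rw [isExtensionPair_iff_exists_embedding_closure_singleton_sup]
  intro S S_FG f m
  by_cases hm : m ∈ S
  · have hle : Substructure.closure Language.graph {m} ⊔ S ≤ S := by
      rw [sup_le_iff]
      exact ⟨by rwa [Substructure.closure_le, Set.singleton_subset_iff], le_rfl⟩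
    refine ⟨f.comp (Substructure.inclusion hle), ?_⟩
    ext x
    rfl
  · -- the domain substructure is finite
    haveI : Finite S := S_FG.finite
    -- images of neighbors and non-neighbors of m
    set A : Finset W := (Set.toFinite (⇑f '' {x : ↥S | G.Adj m ↑x})).toFinset with hA
    set B : Finset W := (Set.toFinite (⇑f '' {x : ↥S | ¬ G.Adj m ↑x})).toFinset with hB
    have hdisj : Disjoint A B := by
      rw [Finset.disjoint_left]
      intro a ha hb
      rw [hA, Set.Finite.mem_toFinset] at ha
      rw [hB, Set.Finite.mem_toFinset] at hb
      obtain ⟨x, hx, rfl⟩ := ha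
      obtain ⟨y, hy, hxy⟩ := hb
      exact hy (by rw [f.injective hxy]; exact hx)
    obtain ⟨w, hwA, hwB, hadj, hnadj⟩ := hH A B hdisj
    have hw1 : ∀ x : ↥S, G.Adj m ↑x → H.Adj w (f x) := fun x hx =>
      hadj _ (by rw [hA, Set.Finite.mem_toFinset]; exact ⟨x, hx, rfl⟩)
    have hw2 : ∀ x : ↥S, ¬ G.Adj m ↑x → ¬ H.Adj w (f x) := fun x hx =>
      hnadj _ (by rw [hB, Set.Finite.mem_toFinset]; exact ⟨x, hx, rfl⟩)
    have hwne : ∀ x : ↥S, f x ≠ w := by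
      intro x hx
      by_cases h : G.Adj m ↑x
      · exact hwA (by rw [hA, Set.Finite.mem_toFinset]; exact ⟨x, h, hx⟩)
      · exact hwB (by rw [hB, Set.Finite.mem_toFinset]; exact ⟨x, h, hx⟩)
    set D : Language.graph.Substructure V := Substructure.closure Language.graph {m} ⊔ S with hD
    have hmem : ∀ x : V, x ∈ D ↔ x = m ∨ x ∈ S := by
      intro x
      rw [hD, ← Substructure.closure_eq (L := Language.graph) S, ← Substructure.closure_union,
        Substructure.mem_closure_iff_of_isRelational]
      simp [Set.mem_insert_iff]
    -- the extended function
    set F : ↥D → W := fun x => if h : (x : V) ∈ S then f ⟨x, h⟩ else w with hF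
    have hFS : ∀ (x : ↥D) (h : (x : V) ∈ S), F x = f ⟨x, h⟩ := by
      intro x h; rw [hF]; simp [h]
    have hFm : ∀ (x : ↥D), (x : V) ∉ S → F x = w ∧ (x : V) = m := by
      intro x h
      refine ⟨by rw [hF]; simp [h], ?_⟩
      rcases (hmem x).1 x.2 with h' | h'
      · exact h'
      · exact absurd h' h
    have Finj : Function.Injective F := by
      intro x y hxy
      by_cases hx : (x : V) ∈ S <;> by_cases hy : (y : V) ∈ S
      · rw [hFS x hx, hFS y hy] at hxy
        have := f.injective hxy
        exact Subtype.ext (by simpa using this)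
      · rw [hFS x hx, (hFm y hy).1] at hxy
        exact absurd hxy (hwne _)
      · rw [hFS y hy, (hFm x hx).1] at hxy
        exact absurd hxy.symm (hwne _)
      · exact Subtype.ext ((hFm x hx).2.trans (hFm y hy).2.symm)
    -- adjacency is preserved and reflected
    have hAdj : ∀ x y : ↥D, H.Adj (F x) (F y) ↔ G.Adj (x : V) (y : V) := by
      intro x y
      by_cases hx : (x : V) ∈ S <;> by_cases hy : (y : V) ∈ S
      · rw [hFS x hx, hFS y hy]
        have := f.map_rel' adj ![⟨x, hx⟩, ⟨y, hy⟩]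
        exact this
      · obtain ⟨hFy, hym⟩ := hFm y hy
        rw [hFS x hx, hFy, hym]
        constructor
        · intro h
          by_contra hadj'
          exact hw2 ⟨x, hx⟩ (fun h' => hadj' h'.symm) h.symm
        · intro h
          exact (hw1 ⟨x, hx⟩ h.symm).symm
      · obtain ⟨hFx, hxm⟩ := hFm x hx
        rw [hFS y hy, hFx, hxm]
        constructor
        · intro h
          by_contra hadj'
          exact hw2 ⟨y, hy⟩ hadj' h
        · exact fun h => hw1 ⟨y, hy⟩ h
      · obtain ⟨hFx, hxm⟩ := hFm x hx
        obtain ⟨hFy, hym⟩ := hFm y hy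
        rw [hFx, hFy, hxm, hym]
        simp
    refine ⟨⟨⟨F, Finj⟩, fun {n} fn x => isEmptyElim fn, ?_⟩, ?_⟩
    · intro n r x
      match n, r with
      | 2, .adj =>
        show H.Adj (F (x 0)) (F (x 1)) ↔ G.Adj ((x 0 : V)) ((x 1 : V))
        exact hAdj (x 0) (x 1)
    · ext x
      show f x = F (Substructure.inclusion le_sup_right x)
      rw [hFS _ x.2]
      rfl

/-- Any two countably infinite graphs with property U are isomorphic
(hence any countably infinite graph with property U is isomorphic to the Rado graph). -/
theorem iso_of_propertyU {V W : Type*} [Countable V] [Infinite V] [Countable W] [Infinite W]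
    (G : SimpleGraph V) (H : SimpleGraph W) (hG : PropertyU G) (hH : PropertyU H) :
    Nonempty (G ≃g H) := by
  letI := G.structure
  letI := H.structure
  obtain ⟨e, -⟩ := equiv_between_cg (L := Language.graph) (M := V) (N := W)
    Structure.cg_of_countable Structure.cg_of_countable default
    (graph_isExtensionPair G H hH) (graph_isExtensionPair H G hG)
  refine ⟨⟨e.toEquiv, ?_⟩⟩
  intro a b
  have := e.map_rel' adj ![a, b]
  constructor
  · intro h
    have h2 := this.1
    exact h2 h
  · intro h
    have h2 := this.2 h
    exact h2
end

section
/- The graph on primes p ≡ 1 (mod 4), with p adjacent to q iff q is a quadratic residue mod p, satisfies property U: for any disjoint finite sets A, B of such primes there is a prime r ≡ 1 (mod 4), r ∉ A ∪ B, which is a quadratic residue mod every a ∈ A and a non-residue mod every b ∈ B. -/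
/-!
Choose a non-residue `u b` modulo each `b ∈ B`. By the Chinese remainder theorem the conditions
`r ≡ 1 (mod 4)`, `r ≡ 1 (mod a)` for `a ∈ A` and `r ≡ u b (mod b)` for `b ∈ B` cut out a single
residue class coprime to `4 ∏ a ∏ b`, and by Dirichlet's theorem it contains primes beyond
`A ∪ B`.
-/

open Finset Function

namespace Nat

theorem exists_prime_gt_forall_modEq {ι : Type*} (s : ι → ℕ) (t : Finset ι)
    (hs : ∀ i ∈ t, s i ≠ 0) (pp : Set.Pairwise t (Coprime on s)) {a : ι → ℕ}
    (ha : ∀ i ∈ t, (a i).Coprime (s i)) (n : ℕ) :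
    ∃ r > n, r.Prime ∧ ∀ i ∈ t, r ≡ a i [MOD s i] := by
  obtain ⟨k, hk⟩ := chineseRemainderOfFinset a s t hs pp
  have hk_coprime : k.Coprime (∏ i ∈ t, s i) :=
    Coprime.prod_right fun i hi => by rw [Coprime, (hk i hi).gcd_eq]; exact ha i hi
  obtain ⟨r, hrn, hr, hrk⟩ :=
    forall_exists_prime_gt_and_modEq n (prod_ne_zero_iff.2 hs) hk_coprime
  exact ⟨r, hrn, hr, fun i hi => (hrk.of_dvd (dvd_prod_of_mem s hi)).trans (hk i hi)⟩

theorem pairwise_coprime_insert_four {s : Finset ℕ} (hs : ∀ p ∈ s, p.Prime ∧ p ≠ 2) :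
    ((insert 4 s : Finset ℕ) : Set ℕ).Pairwise Coprime := by
  rw [coe_insert, Set.pairwise_insert]
  refine ⟨fun p hp q hq hpq => (coprime_primes (hs p hp).1 (hs q hq).1).2 hpq,
    fun p hp _ => ?_⟩
  have h4p : Coprime (2 ^ 2) p :=
    ((coprime_primes prime_two (hs p hp).1).2 (hs p hp).2.symm).pow_left 2
  exact ⟨h4p, h4p.symm⟩

theorem Prime.exists_coprime_not_isSquare {p : ℕ} (hp : p.Prime) (hp2 : p ≠ 2) :
    ∃ n : ℕ, n.Coprime p ∧ ¬ IsSquare (n : ZMod p) := by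
  have := Fact.mk hp
  obtain ⟨u, hu⟩ := FiniteField.exists_nonsquare (F := ZMod p) (by rwa [ZMod.ringChar_zmod_n])
  refine ⟨ZMod.val u, ((hp.coprime_iff_not_dvd).2 ?_).symm, by rwa [ZMod.natCast_zmod_val]⟩
  rw [← ZMod.natCast_eq_zero_iff, ZMod.natCast_zmod_val]
  rintro rfl
  exact hu IsSquare.zero

theorem exists_prime_gt_modEq_four_and_forall_modEq {s : Finset ℕ}
    (hs : ∀ p ∈ s, p.Prime ∧ p ≠ 2) {a : ℕ → ℕ} (ha : ∀ p ∈ s, (a p).Coprime p) (n : ℕ) :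
    ∃ r > n, r.Prime ∧ r ≡ 1 [MOD 4] ∧ ∀ p ∈ s, r ≡ a p [MOD p] := by
  have hne : ∀ p ∈ s, p ≠ 4 := fun p hp h => absurd (hs p hp).1 (h ▸ by norm_num)
  obtain ⟨r, hrn, hr, hra⟩ := exists_prime_gt_forall_modEq id (insert 4 s)
    (by simpa using fun p hp => (hs p hp).1.ne_zero) (pairwise_coprime_insert_four hs)
    (a := update a 4 1) (fun p hp => by
      rcases mem_insert.1 hp with rfl | hp
      · simp
      · simpa [update_of_ne (hne p hp)] using ha p hp) n
  refine ⟨r, hrn, hr, by simpa using hra 4 (mem_insert_self 4 s), fun p hp => ?_⟩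
  simpa [hne p hp] using hra p (mem_insert_of_mem hp)

end Nat

/-- The graph on primes ≡ 1 (mod 4), with p ~ q iff q is a QR mod p, has property U. -/
theorem prime_qr_graph_propertyU (A B : Finset ℕ)
    (hA : ∀ a ∈ A, a.Prime ∧ a % 4 = 1) (hB : ∀ b ∈ B, b.Prime ∧ b % 4 = 1)
    (hAB : Disjoint A B) :
    ∃ r : ℕ, r.Prime ∧ r % 4 = 1 ∧ r ∉ A ∧ r ∉ B ∧
      (∀ a ∈ A, IsSquare (r : ZMod a)) ∧ (∀ b ∈ B, ¬ IsSquare (r : ZMod b)) := by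
  have hodd : ∀ p ∈ A ∪ B, p.Prime ∧ p ≠ 2 := fun p hp => by
    obtain ⟨hp, hp4⟩ := (mem_union.1 hp).elim (hA p) (hB p)
    exact ⟨hp, by rintro rfl; simp at hp4⟩
  choose u hu using fun b (hb : b ∈ B) =>
    (hB b hb).1.exists_coprime_not_isSquare (hodd b (mem_union_right A hb)).2
  obtain ⟨r, hr_gt, hr, hr4, hr_mod⟩ := Nat.exists_prime_gt_modEq_four_and_forall_modEq hodd
    (a := fun p => if hp : p ∈ B then u p hp else 1)
    (fun p _ => by split_ifs with hp; exacts [(hu p hp).1, Nat.coprime_one_left p]) ((A ∪ B).sup id)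
  have hr_notMem : r ∉ A ∪ B := fun h => (le_sup (f := id) h).not_gt hr_gt
  refine ⟨r, hr, hr4, fun h => hr_notMem (mem_union_left B h),
    fun h => hr_notMem (mem_union_right A h), fun a ha => ?_, fun b hb => ?_⟩
  · have hr1 : r ≡ 1 [MOD a] := by
      simpa [disjoint_left.1 hAB ha] using hr_mod a (mem_union_left B ha)
    rw [(ZMod.natCast_eq_natCast_iff r 1 a).2 hr1, Nat.cast_one]
    exact IsSquare.one
  · have hru : r ≡ u b hb [MOD b] := by simpa [hb] using hr_mod b (mem_union_right A hb)
    rw [(ZMod.natCast_eq_natCast_iff r _ b).2 hru]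
    exact (hu b hb).2
end

section
/- Assume Weil's bound: for distinct c₁,…,c_k in a finite field F of odd order q with quadratic character χ, |∑_{x∈F} χ(x-c₁)⋯χ(x-c_k)| ≤ (k-1)√q. Then for disjoint finite sets A, B ⊆ F with |A| + |B| = n, the number N of x ∈ F such that x - a is a nonzero square for all a ∈ A and x - b is a non-square for all b ∈ B satisfies |N - q/2^n| ≤ ((n-2+2^{1-n})√q + n)/2 whenever n ≥ 1; in particular N > 0 when q is sufficiently large relative to n. -/
/-!
Expanding `∏_{c ∈ A ∪ B} (1 + ε_c χ(x - c)) / 2`, with `ε_c = 1` on `A` and `-1` on `B`, gives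
a weight that is the indicator of the condition away from `A ∪ B` and lies in `[0, 1/2]` on it.
Summed over `x`, the empty subset of `A ∪ B` contributes `q / 2^n`, and each nonempty subset `S`
contributes a character sum of size at most `(|S| - 1)√q` by Weil's bound; since
`∑_{∅ ≠ S ⊆ A ∪ B} (|S| - 1) = (n/2 - 1) 2^n + 1`, this gives the estimate.
-/

open Finset

section PowersetSums

variable {ι : Type*} [DecidableEq ι]

theorem two_mul_sum_card_powerset (s : Finset ι) :
    2 * ∑ t ∈ s.powerset, t.card = s.card * 2 ^ s.card := by
  have hcompl : ∑ t ∈ s.powerset, (s \ t).card = ∑ t ∈ s.powerset, t.card :=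
    sum_nbij' (s \ ·) (s \ ·) (by simp) (by simp)
      (fun t ht => Finset.sdiff_sdiff_eq_self (mem_powerset.1 ht))
      (fun t ht => Finset.sdiff_sdiff_eq_self (mem_powerset.1 ht)) fun _ _ => rfl
  calc 2 * ∑ t ∈ s.powerset, t.card
      = ∑ t ∈ s.powerset, ((s \ t).card + t.card) := by rw [sum_add_distrib, hcompl, two_mul]
    _ = ∑ t ∈ s.powerset, s.card :=
      sum_congr rfl fun t ht => card_sdiff_add_card_eq_card (mem_powerset.1 ht)
    _ = s.card * 2 ^ s.card := by rw [sum_const, card_powerset, smul_eq_mul, mul_comm]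

theorem sum_powerset_erase_empty_card_sub_one (s : Finset ι) :
    ∑ t ∈ s.powerset.erase ∅, ((t.card : ℝ) - 1) = ((s.card : ℝ) / 2 - 1) * 2 ^ s.card + 1 := by
  have hcard : (2 : ℝ) * ∑ t ∈ s.powerset, (t.card : ℝ) = s.card * 2 ^ s.card := by
    exact_mod_cast two_mul_sum_card_powerset s
  have hfull : ∑ t ∈ s.powerset, ((t.card : ℝ) - 1) = ((s.card : ℝ) / 2 - 1) * 2 ^ s.card := by
    rw [sum_sub_distrib, sum_const, card_powerset, nsmul_eq_mul, mul_one]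
    push_cast
    linarith
  rw [← add_sum_erase _ _ (empty_mem_powerset s), card_empty, Nat.cast_zero] at hfull
  linarith

end PowersetSums

section HalfShiftedProducts

variable {ι : Type*} (s : Finset ι) (u : ι → ℝ)

theorem prod_one_add_div_two :
    ∏ i ∈ s, (1 + u i) / 2 = (∑ t ∈ s.powerset, ∏ i ∈ t, u i) / 2 ^ s.card := by
  rw [prod_div_distrib, prod_const, prod_one_add]

variable {s u}

theorem one_add_div_two_mem_Icc {a : ℝ} (ha : |a| ≤ 1) : (1 + a) / 2 ∈ Set.Icc (0 : ℝ) 1 := by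
  rw [abs_le] at ha
  constructor <;> linarith

theorem prod_one_add_div_two_nonneg (hu : ∀ i ∈ s, |u i| ≤ 1) : 0 ≤ ∏ i ∈ s, (1 + u i) / 2 :=
  prod_nonneg fun i hi => (one_add_div_two_mem_Icc (hu i hi)).1

theorem prod_one_add_div_two_le_half [DecidableEq ι] (hu : ∀ i ∈ s, |u i| ≤ 1) {j : ι}
    (hj : j ∈ s) (huj : u j = 0) : ∏ i ∈ s, (1 + u i) / 2 ≤ 1 / 2 := by
  rw [← mul_prod_erase s _ hj, huj, add_zero]
  refine mul_le_of_le_one_right (by norm_num) (prod_le_one (fun i hi => ?_) fun i hi => ?_)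
  · exact (one_add_div_two_mem_Icc (hu i (mem_of_mem_erase hi))).1
  · exact (one_add_div_two_mem_Icc (hu i (mem_of_mem_erase hi))).2

end HalfShiftedProducts

def membershipSign {α : Type*} [DecidableEq α] (A : Finset α) (c : α) : ℝ :=
  if c ∈ A then 1 else -1

theorem abs_membershipSign {α : Type*} [DecidableEq α] (A : Finset α) (c : α) :
    |membershipSign A c| = 1 := by
  unfold membershipSign; split_ifs <;> simp

theorem abs_prod_membershipSign {α : Type*} [DecidableEq α] (A S : Finset α) :
    |∏ c ∈ S, membershipSign A c| = 1 := by
  rw [abs_prod]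
  exact prod_eq_one fun c _ => abs_membershipSign A c

section QuadraticChar

variable {F : Type*} [Field F] [Fintype F] [DecidableEq F]

variable (F) in
def WeilBound : Prop :=
  ∀ (k : ℕ) (c : Fin k → F), Function.Injective c → 1 ≤ k →
    |∑ x : F, ∏ i : Fin k, ((quadraticChar F (x - c i) : ℤ) : ℝ)| ≤
      ((k : ℝ) - 1) * √(Fintype.card F)

theorem WeilBound.abs_sum_prod_le (hW : WeilBound F) {S : Finset F} (hS : S.Nonempty) :
    |∑ x : F, ∏ c ∈ S, (quadraticChar F (x - c) : ℝ)| ≤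
      ((S.card : ℝ) - 1) * √(Fintype.card F) := by
  have h := hW S.card (fun i => S.equivFin.symm i)
    (Subtype.val_injective.comp S.equivFin.symm.injective) hS.card_pos
  convert h using 4 with x
  rw [← prod_coe_sort S, ← S.equivFin.symm.prod_comp]

theorem abs_quadraticChar_le_one (y : F) : |(quadraticChar F y : ℝ)| ≤ 1 := by
  rcases eq_or_ne y 0 with rfl | hy
  · simp
  · rcases quadraticChar_dichotomy hy with h | h <;> simp [h]

theorem one_add_membershipSign_mul_quadraticChar_div_two (A : Finset F) (c : F) {y : F}
    (hy : y ≠ 0) :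
    (1 + membershipSign A c * quadraticChar F y) / 2 = if (c ∈ A ↔ IsSquare y) then 1 else 0 := by
  by_cases hsq : IsSquare y
  · have h := (quadraticChar_one_iff_isSquare hy).2 hsq
    by_cases hc : c ∈ A <;> simp [membershipSign, h, hc, hsq]
  · have h := quadraticChar_neg_one_iff_not_isSquare.2 hsq
    by_cases hc : c ∈ A <;> simp [membershipSign, h, hc, hsq]

noncomputable def paleyWeight (A B : Finset F) (x : F) : ℝ :=
  ∏ c ∈ A ∪ B, (1 + membershipSign A c * quadraticChar F (x - c)) / 2

variable {A B : Finset F}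

theorem paleyWeight_eq_ite (hAB : Disjoint A B) {x : F} (hx : x ∉ A ∪ B) :
    paleyWeight A B x = if (∀ a ∈ A, x - a ≠ 0 ∧ IsSquare (x - a)) ∧
      (∀ b ∈ B, ¬ IsSquare (x - b)) then 1 else 0 := by
  have hne : ∀ c ∈ A ∪ B, x - c ≠ 0 := fun c hc h => hx (sub_eq_zero.1 h ▸ hc)
  rw [paleyWeight, prod_congr rfl fun c hc =>
    one_add_membershipSign_mul_quadraticChar_div_two A c (hne c hc), prod_boole]
  congr 1
  refine propext ⟨fun h => ⟨fun a ha => ⟨hne a (mem_union_left B ha),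
      (h a (mem_union_left B ha)).1 ha⟩,
      fun b hb hsq => disjoint_left.1 hAB ((h b (mem_union_right A hb)).2 hsq) hb⟩,
    fun ⟨hA, hB⟩ c hc => ?_⟩
  rcases mem_union.1 hc with hcA | hcB
  · exact iff_of_true hcA (hA c hcA).2
  · exact iff_of_false (disjoint_right.1 hAB hcB) (hB c hcB)

theorem abs_membershipSign_mul_quadraticChar_le_one (A : Finset F) (c y : F) :
    |membershipSign A c * quadraticChar F y| ≤ 1 := by
  rw [abs_mul, abs_membershipSign, one_mul]
  exact abs_quadraticChar_le_one y

theorem paleyWeight_nonneg (A B : Finset F) (x : F) : 0 ≤ paleyWeight A B x :=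
  prod_one_add_div_two_nonneg fun c _ => abs_membershipSign_mul_quadraticChar_le_one A c _

theorem paleyWeight_le_half (A B : Finset F) {x : F} (hx : x ∈ A ∪ B) :
    paleyWeight A B x ≤ 1 / 2 :=
  prod_one_add_div_two_le_half (fun c _ => abs_membershipSign_mul_quadraticChar_le_one A c _) hx
    (by simp)

theorem abs_card_sub_sum_paleyWeight_le (hAB : Disjoint A B) :
    |((univ.filter fun x : F =>
        (∀ a ∈ A, x - a ≠ 0 ∧ IsSquare (x - a)) ∧ (∀ b ∈ B, ¬ IsSquare (x - b))).card : ℝ)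
      - ∑ x, paleyWeight A B x| ≤ (A ∪ B).card / 2 := by
  rw [card_filter, Nat.cast_sum, ← sum_sub_distrib]
  simp only [Nat.cast_ite, Nat.cast_one, Nat.cast_zero]
  rw [← sum_subset (subset_univ (A ∪ B)) fun x _ hx => by
    rw [paleyWeight_eq_ite hAB hx, sub_self]]
  calc _ ≤ ∑ x ∈ A ∪ B, |_| := abs_sum_le_sum_abs _ _
    _ ≤ ∑ x ∈ A ∪ B, (1 / 2 : ℝ) := sum_le_sum fun x hx => ?_
    _ = _ := by rw [sum_const, nsmul_eq_mul, mul_one_div]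
  have hfail : ¬ ((∀ a ∈ A, x - a ≠ 0 ∧ IsSquare (x - a)) ∧ ∀ b ∈ B, ¬ IsSquare (x - b)) := by
    rintro ⟨hA, hB⟩
    rcases mem_union.1 hx with h | h
    · exact (hA x h).1 (sub_self x)
    · exact hB x h (sub_self x ▸ IsSquare.zero)
  rw [if_neg hfail, zero_sub, abs_neg, abs_of_nonneg (paleyWeight_nonneg A B x)]
  exact paleyWeight_le_half A B hx

theorem abs_sum_paleyWeight_sub_le (hW : WeilBound F) (A B : Finset F) :
    |∑ x, paleyWeight A B x - Fintype.card F / 2 ^ (A ∪ B).card| ≤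
      (((A ∪ B).card : ℝ) / 2 - 1 + 1 / 2 ^ (A ∪ B).card) * √(Fintype.card F) := by
  set T : Finset F → ℝ := fun S => ∑ x, ∏ c ∈ S, membershipSign A c * quadraticChar F (x - c)
  have hexpand : ∑ x, paleyWeight A B x =
      (Fintype.card F + ∑ S ∈ (A ∪ B).powerset.erase ∅, T S) / 2 ^ (A ∪ B).card := by
    simp only [paleyWeight, prod_one_add_div_two, ← sum_div]
    rw [sum_comm, ← add_sum_erase _ _ (empty_mem_powerset _)]
    simp [T]
  have hT : ∀ S ∈ (A ∪ B).powerset.erase ∅, |T S| ≤ ((S.card : ℝ) - 1) * √(Fintype.card F) := by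
    intro S hS
    simp only [T, prod_mul_distrib, ← mul_sum, abs_mul, abs_prod_membershipSign, one_mul]
    exact hW.abs_sum_prod_le (nonempty_iff_ne_empty.2 (ne_of_mem_erase hS))
  calc _ = |∑ S ∈ (A ∪ B).powerset.erase ∅, T S| / 2 ^ (A ∪ B).card := by
        rw [hexpand, add_div, add_sub_cancel_left, abs_div, abs_pow, abs_two]
    _ ≤ (∑ S ∈ (A ∪ B).powerset.erase ∅, ((S.card : ℝ) - 1) * √(Fintype.card F)) /
          2 ^ (A ∪ B).card := by
        gcongr
        exact (abs_sum_le_sum_abs _ _).trans (sum_le_sum hT)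
    _ = _ := by
        rw [← sum_mul, sum_powerset_erase_empty_card_sub_one]
        field_simp

end QuadraticChar

theorem paley_count_estimate_general (F : Type*) [Field F] [Fintype F] [DecidableEq F]
    (hWeil : ∀ (k : ℕ) (c : Fin k → F), Function.Injective c → 1 ≤ k →
      |∑ x : F, ∏ i : Fin k, ((quadraticChar F (x - c i) : ℤ) : ℝ)| ≤
        ((k : ℝ) - 1) * Real.sqrt (Fintype.card F))
    (A B : Finset F) (hAB : Disjoint A B) (n : ℕ) (hn : n = A.card + B.card) :
    |((univ.filter fun x : F =>
        (∀ a ∈ A, x - a ≠ 0 ∧ IsSquare (x - a)) ∧ (∀ b ∈ B, ¬ IsSquare (x - b))).card : ℝ)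
        - (Fintype.card F : ℝ) / 2 ^ n| ≤
      (((n : ℝ) - 2 + (2 : ℝ) ^ ((1 : ℤ) - (n : ℤ))) * Real.sqrt (Fintype.card F) + n) / 2 := by
  have hcard : (A ∪ B).card = n := by rw [card_union_of_disjoint hAB, hn]
  have hcount := abs_card_sub_sum_paleyWeight_le hAB
  have hweil := abs_sum_paleyWeight_sub_le hWeil A B
  rw [hcard] at hcount hweil
  rw [zpow_sub₀ two_ne_zero, zpow_one, zpow_natCast]
  calc _ ≤ _ := abs_sub_le _ (∑ x, paleyWeight A B x) _
    _ ≤ _ := add_le_add hcount hweil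
    _ = _ := by field_simp; ring

/-- Assuming Weil's bound for the quadratic character, the number N of x with
x - a a nonzero square for all a ∈ A and x - b a non-square for all b ∈ B satisfies
|N - q/2^n| ≤ ((n - 2 + 2^{1-n})√q + n)/2, where n = |A| + |B| ≥ 1. -/
theorem paley_count_estimate (F : Type*) [Field F] [Fintype F] [DecidableEq F]
    (hodd : Odd (Fintype.card F))
    (hWeil : ∀ (k : ℕ) (c : Fin k → F), Function.Injective c → 1 ≤ k →
      |∑ x : F, ∏ i : Fin k, ((quadraticChar F (x - c i) : ℤ) : ℝ)| ≤
        ((k : ℝ) - 1) * Real.sqrt (Fintype.card F))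
    (A B : Finset F) (hAB : Disjoint A B) (n : ℕ) (hn : n = A.card + B.card) (hn1 : 1 ≤ n) :
    |((univ.filter fun x : F =>
        (∀ a ∈ A, x - a ≠ 0 ∧ IsSquare (x - a)) ∧ (∀ b ∈ B, ¬ IsSquare (x - b))).card : ℝ)
        - (Fintype.card F : ℝ) / 2 ^ n| ≤
      (((n : ℝ) - 2 + (2 : ℝ) ^ ((1 : ℤ) - (n : ℤ))) * Real.sqrt (Fintype.card F) + n) / 2 :=
  paley_count_estimate_general F hWeil A B hAB n hn
end

section
/- For any finite graph G of order n ≥ 2, there exist distinct vertices u, v with Δ_{uv} ≤ ⌊(n-1)/2⌋, where Δ_{uv} is the number of vertices w ∉ {u,v} adjacent to exactly one of u and v. -/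
/-!
Double count the triples `(u, v, w)` in which `w` is adjacent to exactly one of `u ≠ v`.
A vertex `w` of degree `d` separates exactly the ordered pairs made of a neighbour and a
non-neighbour of `w`, that is `2 d (n - 1 - d) ≤ (n - 1)² / 2` pairs by AM-GM. Averaging
over the `n (n - 1)` ordered pairs `u ≠ v` then gives a pair with `2 Δ_{uv} ≤ n - 1`.
-/

open Finset

namespace SimpleGraph

variable {V : Type*} [Fintype V] [DecidableEq V] (G : SimpleGraph V) [DecidableRel G.Adj]

def separatingSet (u v : V) : Finset V :=
  {w | w ≠ u ∧ w ≠ v ∧ Xor (G.Adj w u) (G.Adj w v)}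

def separatedPairs (w : V) : Finset (V × V) :=
  {p | w ∈ G.separatingSet p.1 p.2}

theorem card_separatingSet_eq_natCard (u v : V) :
    #(G.separatingSet u v) =
      Nat.card {w // w ≠ u ∧ w ≠ v ∧ Xor (G.Adj w u) (G.Adj w v)} := by
  rw [Nat.card_eq_fintype_card, Fintype.card_subtype, separatingSet]

variable {G} in
theorem mem_separatingSet_iff_compl {u v w : V} :
    w ∈ G.separatingSet u v ↔ G.Adj w u ∧ Gᶜ.Adj w v ∨ Gᶜ.Adj w u ∧ G.Adj w v := by
  simp only [separatingSet, mem_filter, mem_univ, true_and, compl_adj, xor_def]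
  constructor
  · rintro ⟨hu, hv, ⟨hwu, hwv⟩ | ⟨hwv, hwu⟩⟩
    · exact .inl ⟨hwu, hv, hwv⟩
    · exact .inr ⟨⟨hu, hwu⟩, hwv⟩
  · rintro (⟨hwu, hv, hwv⟩ | ⟨⟨hu, hwu⟩, hwv⟩)
    · exact ⟨hwu.ne, hv, .inl ⟨hwu, hwv⟩⟩
    · exact ⟨hu, hwv.ne, .inr ⟨hwv, hwu⟩⟩

theorem separatedPairs_eq (w : V) :
    G.separatedPairs w = G.neighborFinset w ×ˢ Gᶜ.neighborFinset w ∪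
      Gᶜ.neighborFinset w ×ˢ G.neighborFinset w := by
  ext ⟨u, v⟩
  simp [separatedPairs, mem_separatingSet_iff_compl]

theorem card_separatedPairs (w : V) :
    #(G.separatedPairs w) = 2 * (G.degree w * Gᶜ.degree w) := by
  have hdisj : Disjoint (G.neighborFinset w) (Gᶜ.neighborFinset w) :=
    Finset.disjoint_left.mpr fun x hG hGc ↦ by simp_all
  rw [separatedPairs_eq, card_union_of_disjoint (disjoint_product.mpr (.inl hdisj)),
    card_product, card_product, card_neighborFinset_eq_degree, card_neighborFinset_eq_degree]
  ring

theorem two_mul_card_separatedPairs_le (w : V) :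
    2 * #(G.separatedPairs w) ≤ (Fintype.card V - 1) ^ 2 := by
  have hdeg : G.degree w + Gᶜ.degree w = Fintype.card V - 1 := by
    have := G.degree_lt_card_verts w
    rw [degree_compl]
    omega
  calc 2 * #(G.separatedPairs w)
      = 4 * G.degree w * Gᶜ.degree w := by rw [card_separatedPairs]; ring
    _ ≤ (G.degree w + Gᶜ.degree w) ^ 2 := four_mul_le_sq_add _ _
    _ = (Fintype.card V - 1) ^ 2 := by rw [hdeg]

theorem sum_card_separatingSet_eq_sum_card_separatedPairs :
    ∑ p : V × V, #(G.separatingSet p.1 p.2) = ∑ w : V, #(G.separatedPairs w) := by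
  simpa [bipartiteAbove, bipartiteBelow, separatedPairs] using
    sum_card_bipartiteAbove_eq_sum_card_bipartiteBelow (s := univ) (t := univ)
      (fun (p : V × V) w ↦ w ∈ G.separatingSet p.1 p.2)

theorem two_mul_sum_card_separatingSet_le :
    2 * ∑ p : V × V, #(G.separatingSet p.1 p.2) ≤
      Fintype.card V * (Fintype.card V - 1) ^ 2 := by
  calc 2 * ∑ p : V × V, #(G.separatingSet p.1 p.2)
      = ∑ w : V, 2 * #(G.separatedPairs w) := by
        rw [sum_card_separatingSet_eq_sum_card_separatedPairs, mul_sum]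
    _ ≤ ∑ _w : V, (Fintype.card V - 1) ^ 2 :=
        sum_le_sum fun w _ ↦ G.two_mul_card_separatedPairs_le w
    _ = Fintype.card V * (Fintype.card V - 1) ^ 2 := by simp

theorem exists_two_mul_card_separatingSet_lt (hn : 2 ≤ Fintype.card V) :
    ∃ u v, u ≠ v ∧ 2 * #(G.separatingSet u v) < Fintype.card V := by
  set n := Fintype.card V
  set pairs := (univ : Finset V).offDiag
  have hpos : 0 < n * (n - 1) := Nat.mul_pos (by omega) (by omega)
  have hlt : ∑ p ∈ pairs, 2 * #(G.separatingSet p.1 p.2) < ∑ _p ∈ pairs, n := by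
    calc ∑ p ∈ pairs, 2 * #(G.separatingSet p.1 p.2)
        ≤ 2 * ∑ p : V × V, #(G.separatingSet p.1 p.2) := by
          rw [← mul_sum]; exact Nat.mul_le_mul_left _ (sum_le_sum_of_subset (subset_univ _))
      _ ≤ n * (n - 1) * (n - 1) := by
          rw [mul_assoc, ← sq]; exact G.two_mul_sum_card_separatingSet_le
      _ < n * (n - 1) * n := Nat.mul_lt_mul_of_pos_left (by omega) hpos
      _ = ∑ _p ∈ pairs, n := by simp [pairs, offDiag_card, n, Nat.mul_sub_one]
  obtain ⟨⟨u, v⟩, huv, h⟩ := exists_lt_of_sum_lt hlt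
  exact ⟨u, v, (mem_offDiag.mp huv).2.2, h⟩

end SimpleGraph

/-- In any finite graph of order n ≥ 2 there exist distinct vertices u, v with
Δ_{uv} ≤ ⌊(n-1)/2⌋, where Δ_{uv} counts vertices w ∉ {u, v} adjacent to exactly
one of u and v. -/
theorem exists_small_delta {V : Type*} [Fintype V] (G : SimpleGraph V)
    (hn : 2 ≤ Fintype.card V) :
    ∃ u v : V, u ≠ v ∧
      Nat.card {w : V // w ≠ u ∧ w ≠ v ∧ Xor' (G.Adj w u) (G.Adj w v)} ≤
        (Fintype.card V - 1) / 2 := by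
  classical
  obtain ⟨u, v, huv, hlt⟩ := G.exists_two_mul_card_separatingSet_lt hn
  refine ⟨u, v, huv, ?_⟩
  calc _ = #(G.separatingSet u v) := (G.card_separatingSet_eq_natCard u v).symm
    _ ≤ _ := by omega
end
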